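/- arXiv:2207.11929 — 4 statements merged into one kernel-verified Lean document; each statement's English description precedes it below -/
import Mathlib

section
/- In a left/right Cayley complex Cay²(A;G;B) satisfying the total-no-conjugacy condition (ga ≠ bg for all g ∈ G, a ∈ A, b ∈ B), the labelling maps are bijective: for each vertex g the map ι_g : A × B → S(g), (a,b) ↦ [a,g,b] is a bijection onto the set of squares containing g; for each left edge e = {g,ag} the map B → S(e), b ↦ [a,g,b] is a bijection onto the squares containing e; and symmetrically for right edges. -/
open Finset

/-- The square `[a,g,b]` of the left/right Cayley complex, as the set of its four
(representative) triples. -/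
def cSquare {G : Type*} [Group G] [DecidableEq G] (a g b : G) : Finset (G × G × G) :=
  {(a, g, b), (a⁻¹, a * g, b), (a⁻¹, a * g * b, b⁻¹), (a, g * b, b⁻¹)}

/-- A square contains the left edge `⌊a,g⌋ = ⌊a⁻¹,ag⌋` if it has a representative rooted
at that edge. -/
def hasLeftEdge {G : Type*} [Group G] (a g : G) (s : Finset (G × G × G)) : Prop :=
  ∃ y : G, (a, g, y) ∈ s ∨ (a⁻¹, a * g, y) ∈ s

/-- A square contains the right edge `⌈g,b⌉ = ⌈gb,b⁻¹⌉` if it has a representative rooted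
at that edge. -/
def hasRightEdge {G : Type*} [Group G] (g b : G) (s : Finset (G × G × G)) : Prop :=
  ∃ x : G, (x, g, b) ∈ s ∨ (x, g * b, b⁻¹) ∈ s

/-!
Every representative `(p, g, q)` of a square `[x,u,y]` has `p = x^{±1}`, `q = y^{±1}` and
determines the square, so for inverse-closed `A`, `B` each square through `g` is `[p,g,q]`
with `p ∈ A`, `q ∈ B`: this is surjectivity. For injectivity, `[a,g,b] = [a',g,b']` puts
`(a,g,b)` among the four representatives of `[a',g,b']`. The second and fourth ones are rooted
at `g` only if `a' = 1` resp. `b' = 1`, which forces `a = a'` resp. `b = b'` anyway; the third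
one would need `g = a'gb'`, i.e. `a'` conjugate to `b'⁻¹`, which TNC forbids.
-/

namespace CayleyComplex

variable {G : Type*} [Group G]

lemma ne_mul_mul_of_noConj {A B : Finset G} (tnc : ∀ g : G, ∀ a ∈ A, ∀ b ∈ B, g * a ≠ b * g)
    (hB : ∀ b ∈ B, b⁻¹ ∈ B) {a b : G} (ha : a ∈ A) (hb : b ∈ B) (g : G) :
    g ≠ a * g * b := by
  intro h
  apply tnc g⁻¹ a ha b⁻¹ (hB b hb)
  calc g⁻¹ * a = (a * g * b)⁻¹ * a := by rw [← h]
    _ = b⁻¹ * g⁻¹ := by group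

variable [DecidableEq G]

lemma mem_cSquare_self (a g b : G) : (a, g, b) ∈ cSquare a g b := by simp [cSquare]

lemma cSquare_inv_left (a g b : G) : cSquare a⁻¹ (a * g) b = cSquare a g b := by
  ext t
  simp only [cSquare, mem_insert, mem_singleton, inv_inv, inv_mul_cancel_left, mul_assoc]
  tauto

lemma cSquare_inv_right (a g b : G) : cSquare a (g * b) b⁻¹ = cSquare a g b := by
  ext t
  simp only [cSquare, mem_insert, mem_singleton, inv_inv, mul_assoc, mul_inv_cancel, mul_one]
  tauto

lemma cSquare_inv_inv (a g b : G) : cSquare a⁻¹ (a * g * b) b⁻¹ = cSquare a g b := by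
  rw [cSquare_inv_right, cSquare_inv_left]

lemma cSquare_eq_of_mem {p g q x u y : G} (h : (p, g, q) ∈ cSquare x u y) :
    cSquare p g q = cSquare x u y := by
  simp only [cSquare, mem_insert, mem_singleton, Prod.mk.injEq] at h
  rcases h with ⟨rfl, rfl, rfl⟩ | ⟨rfl, rfl, rfl⟩ | ⟨rfl, rfl, rfl⟩ | ⟨rfl, rfl, rfl⟩
  exacts [rfl, cSquare_inv_left _ _ _, cSquare_inv_inv _ _ _, cSquare_inv_right _ _ _]

lemma mem_of_mem_cSquare {A B : Finset G} (hA : ∀ a ∈ A, a⁻¹ ∈ A) (hB : ∀ b ∈ B, b⁻¹ ∈ B)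
    {p g q x u y : G} (hx : x ∈ A) (hy : y ∈ B) (h : (p, g, q) ∈ cSquare x u y) :
    p ∈ A ∧ q ∈ B := by
  simp only [cSquare, mem_insert, mem_singleton, Prod.mk.injEq] at h
  rcases h with ⟨rfl, -, rfl⟩ | ⟨rfl, -, rfl⟩ | ⟨rfl, -, rfl⟩ | ⟨rfl, -, rfl⟩
  exacts [⟨hx, hy⟩, ⟨hA x hx, hy⟩, ⟨hA x hx, hB y hy⟩, ⟨hx, hB y hy⟩]

lemma cSquare_eq_cSquare_iff {a g b a' b' : G} (hne : g ≠ a' * g * b') :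
    cSquare a g b = cSquare a' g b' ↔ a = a' ∧ b = b' := by
  refine ⟨fun h => ?_, fun ⟨ha, hb⟩ => ha ▸ hb ▸ rfl⟩
  have hmem := h ▸ mem_cSquare_self a g b
  simp only [cSquare, mem_insert, mem_singleton, Prod.mk.injEq] at hmem
  rcases hmem with ⟨ha, -, hb⟩ | ⟨rfl, hg, rfl⟩ | ⟨-, hg, -⟩ | ⟨rfl, hg, rfl⟩
  · exact ⟨ha, hb⟩
  · obtain rfl : a' = 1 := mul_eq_right.1 hg.symm
    simp
  · exact absurd hg hne
  · obtain rfl : b' = 1 := mul_eq_left.1 hg.symm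
    simp

section squares

variable [Fintype G] {A B : Finset G}

def squares (A B : Finset G) : Finset (Finset (G × G × G)) :=
  (A ×ˢ (univ : Finset G) ×ˢ B).image fun t => cSquare t.1 t.2.1 t.2.2

lemma cSquare_mem_squares {a b : G} (ha : a ∈ A) (hb : b ∈ B) (g : G) :
    cSquare a g b ∈ squares A B :=
  mem_image.2 ⟨(a, g, b), by simp [ha, hb], rfl⟩

lemma eq_cSquare_of_mem_squares (hA : ∀ a ∈ A, a⁻¹ ∈ A) (hB : ∀ b ∈ B, b⁻¹ ∈ B)
    {s : Finset (G × G × G)} {p g q : G} (hs : s ∈ squares A B)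
    (h : (p, g, q) ∈ s) : p ∈ A ∧ q ∈ B ∧ s = cSquare p g q := by
  obtain ⟨⟨x, u, y⟩, hxuy, rfl⟩ := mem_image.1 hs
  simp only [mem_product, mem_univ, true_and] at hxuy
  obtain ⟨hp, hq⟩ := mem_of_mem_cSquare hA hB hxuy.1 hxuy.2 h
  exact ⟨hp, hq, (cSquare_eq_of_mem h).symm⟩

lemma exists_eq_cSquare_of_hasLeftEdge (hA : ∀ a ∈ A, a⁻¹ ∈ A) (hB : ∀ b ∈ B, b⁻¹ ∈ B)
    {s : Finset (G × G × G)} {a g : G}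
    (hs : s ∈ squares A B) (h : hasLeftEdge a g s) : ∃ b ∈ B, cSquare a g b = s := by
  obtain ⟨b, hb | hb⟩ := h
  · obtain ⟨-, hbB, rfl⟩ := eq_cSquare_of_mem_squares hA hB hs hb
    exact ⟨b, hbB, rfl⟩
  · obtain ⟨-, hbB, rfl⟩ := eq_cSquare_of_mem_squares hA hB hs hb
    exact ⟨b, hbB, (cSquare_inv_left a g b).symm⟩

lemma exists_eq_cSquare_of_hasRightEdge (hA : ∀ a ∈ A, a⁻¹ ∈ A) (hB : ∀ b ∈ B, b⁻¹ ∈ B)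
    {s : Finset (G × G × G)} {g b : G}
    (hs : s ∈ squares A B) (h : hasRightEdge g b s) : ∃ a ∈ A, cSquare a g b = s := by
  obtain ⟨a, ha | ha⟩ := h
  · obtain ⟨haA, -, rfl⟩ := eq_cSquare_of_mem_squares hA hB hs ha
    exact ⟨a, haA, rfl⟩
  · obtain ⟨haA, -, rfl⟩ := eq_cSquare_of_mem_squares hA hB hs ha
    exact ⟨a, haA, (cSquare_inv_right a g b).symm⟩

end squares

end CayleyComplex

open CayleyComplex

/-- **Bijectivity of the labelling maps under (TNC).** In a left/right Cayley complex
satisfying the total no-conjugacy condition, `ι_g : A × B → S(g)` is a bijection onto the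
squares containing the vertex `g`, and for each left (resp. right) edge the labelling map
from `B` (resp. `A`) is a bijection onto the squares containing that edge. -/
theorem stmt6 {G : Type*} [Group G] [Fintype G] [DecidableEq G]
    (A B : Finset G)
    (hAsym : ∀ a ∈ A, a⁻¹ ∈ A) (hBsym : ∀ b ∈ B, b⁻¹ ∈ B)
    (tnc : ∀ g : G, ∀ a ∈ A, ∀ b ∈ B, g * a ≠ b * g)
    (S : Finset (Finset (G × G × G)))
    (hS : S = (A ×ˢ (univ : Finset G) ×ˢ B).image fun t => cSquare t.1 t.2.1 t.2.2) :
    (∀ g : G, Set.BijOn (fun p : G × G => cSquare p.1 g p.2) ↑(A ×ˢ B)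
      {s | s ∈ S ∧ g ∈ s.image fun t => t.2.1}) ∧
    (∀ a ∈ A, ∀ g : G, Set.BijOn (fun b : G => cSquare a g b) ↑B
      {s | s ∈ S ∧ hasLeftEdge a g s}) ∧
    (∀ b ∈ B, ∀ g : G, Set.BijOn (fun a : G => cSquare a g b) ↑A
      {s | s ∈ S ∧ hasRightEdge g b s}) := by
  obtain rfl : S = squares A B := hS
  have hinj {a b a' b' : G} (g : G) (ha' : a' ∈ A) (hb' : b' ∈ B) :
      cSquare a g b = cSquare a' g b' → a = a' ∧ b = b' :=
    (cSquare_eq_cSquare_iff (ne_mul_mul_of_noConj tnc hBsym ha' hb' g)).1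
  refine ⟨fun g => ⟨?_, ?_, ?_⟩, fun a ha g => ⟨?_, ?_, ?_⟩, fun b hb g => ⟨?_, ?_, ?_⟩⟩
  · rintro ⟨a, b⟩ hab
    obtain ⟨ha, hb⟩ := mem_product.1 hab
    exact ⟨cSquare_mem_squares ha hb g, mem_image_of_mem _ (mem_cSquare_self a g b)⟩
  · rintro ⟨a, b⟩ - ⟨a', b'⟩ hab' h
    obtain ⟨ha', hb'⟩ := mem_product.1 hab'
    exact Prod.ext_iff.2 (hinj g ha' hb' h)
  · rintro s ⟨hs, hg⟩
    obtain ⟨⟨p, _, q⟩, hpq, rfl⟩ := mem_image.1 hg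
    obtain ⟨hp, hq, rfl⟩ := eq_cSquare_of_mem_squares hAsym hBsym hs hpq
    exact ⟨(p, q), mem_product.2 ⟨hp, hq⟩, rfl⟩
  · exact fun b hb => ⟨cSquare_mem_squares ha hb g, b, .inl (mem_cSquare_self a g b)⟩
  · exact fun b _ b' hb' h => (hinj g ha hb' h).2
  · exact fun s ⟨hs, he⟩ => exists_eq_cSquare_of_hasLeftEdge hAsym hBsym hs he
  · exact fun a ha => ⟨cSquare_mem_squares ha hb g, a, .inl (mem_cSquare_self a g b)⟩
  · exact fun a _ a' ha' h => (hinj g ha' hb h).1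
  · exact fun s ⟨hs, he⟩ => exists_eq_cSquare_of_hasRightEdge hAsym hBsym hs he
end

section
/- Let G be a finite group with symmetric generating set S₀ of size p+1 such that Cay(G,S₀) has normalized second eigenvalue at most 2√p/(p+1). Then for any symmetric subset S ⊆ S₀ with p+1−√p ≤ |S| = r ≤ p+1, the Cayley graph Cay(G,S) has normalized second eigenvalue at most 5·r^{−1/2}. -/
open Finset

set_option maxHeartbeats 1000000 in
/-- **Quasi-Ramanujan subgraphs of Ramanujan Cayley graphs.** If `Cay(G,S₀)` with
`|S₀| = p + 1` has normalized second eigenvalue at most `2√p/(p+1)` (expressed via the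
Rayleigh quotient of the adjacency quadratic form on functions orthogonal to constants),
then for any symmetric `S ⊆ S₀` with `p + 1 − √p ≤ |S| = r ≤ p + 1`, the Cayley graph
`Cay(G,S)` has normalized second eigenvalue at most `5·r^{-1/2}`. -/
theorem stmt7 {G : Type*} [Group G] [Fintype G] [DecidableEq G]
    (p : ℕ) (S0 S : Finset G) (hsub : S ⊆ S0)
    (hS0sym : ∀ s ∈ S0, s⁻¹ ∈ S0) (hSsym : ∀ s ∈ S, s⁻¹ ∈ S)
    (hgen : Subgroup.closure (S0 : Set G) = ⊤)
    (hcard0 : S0.card = p + 1)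
    (r : ℕ) (hr : S.card = r)
    (hlow : (p : ℝ) + 1 - Real.sqrt p ≤ (r : ℝ)) (hhigh : r ≤ p + 1)
    (hexp0 : ∀ f : G → ℝ, ∑ g, f g = 0 →
      ∑ g, f g * ∑ s ∈ S0, f (g * s)
        ≤ (2 * Real.sqrt p / ((p : ℝ) + 1)) * ((p : ℝ) + 1) * ∑ g, f g ^ 2) :
    ∀ f : G → ℝ, ∑ g, f g = 0 →
      ∑ g, f g * ∑ s ∈ S, f (g * s)
        ≤ (5 / Real.sqrt r) * (r : ℝ) * ∑ g, f g ^ 2 := by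
  intro f hf
  set F : ℝ := ∑ g, f g ^ 2 with hF
  have hFnonneg : 0 ≤ F := Finset.sum_nonneg fun g _ => sq_nonneg _
  -- translated sum of squares is the same
  have htrans : ∀ s : G, ∑ g, f (g * s) ^ 2 = F := by
    intro s
    exact Fintype.sum_equiv (Equiv.mulRight s) _ _ (fun g => rfl)
  -- each term of the quadratic form is at least -F
  have hterm : ∀ s : G, -F ≤ ∑ g, f g * f (g * s) := by
    intro s
    have h0 : (0:ℝ) ≤ ∑ g, (f g + f (g * s)) ^ 2 :=
      Finset.sum_nonneg fun g _ => sq_nonneg _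
    have hexp : ∑ g, (f g + f (g * s)) ^ 2
        = (∑ g, f g ^ 2) + 2 * (∑ g, f g * f (g * s)) + ∑ g, f (g * s) ^ 2 := by
      rw [Finset.mul_sum, ← Finset.sum_add_distrib, ← Finset.sum_add_distrib]
      exact Finset.sum_congr rfl fun g _ => by ring
    have ht := htrans s
    rw [hF]
    linarith
  -- swap sums
  have hswap : ∀ T : Finset G, ∑ g, f g * ∑ s ∈ T, f (g * s)
      = ∑ s ∈ T, ∑ g, f g * f (g * s) := by
    intro T
    simp_rw [Finset.mul_sum]
    exact Finset.sum_comm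
  -- split S0 into S and S0 \ S
  have hsplit : (∑ s ∈ S0 \ S, ∑ g, f g * f (g * s))
      + ∑ s ∈ S, ∑ g, f g * f (g * s)
      = ∑ s ∈ S0, ∑ g, f g * f (g * s) := Finset.sum_sdiff hsub
  have hTcard : ((S0 \ S).card : ℝ) = (p : ℝ) + 1 - r := by
    rw [Finset.card_sdiff_of_subset hsub, hr, hcard0]
    push_cast [Nat.cast_sub hhigh]
    ring
  have hTbound : -(((p:ℝ) + 1 - r) * F) ≤ ∑ s ∈ S0 \ S, ∑ g, f g * f (g * s) := by
    calc -(((p:ℝ) + 1 - r) * F) = ∑ _s ∈ S0 \ S, -F := by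
          rw [Finset.sum_const, ← hTcard]; push_cast; ring
      _ ≤ _ := Finset.sum_le_sum fun s _ => hterm s
  have h0 := hexp0 f hf
  rw [hswap] at h0 ⊢
  have hp1 : (0:ℝ) < (p:ℝ) + 1 := by positivity
  have hc0 : (2 * Real.sqrt p / ((p : ℝ) + 1)) * ((p : ℝ) + 1) = 2 * Real.sqrt p :=
    div_mul_cancel₀ _ (ne_of_gt hp1)
  rw [hc0] at h0
  -- combine
  have hmain : ∑ s ∈ S, ∑ g, f g * f (g * s)
      ≤ 2 * Real.sqrt p * F + ((p:ℝ) + 1 - r) * F := by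
    linarith [hsplit, hTbound, h0]
  -- arithmetic: 2√p + (p+1-r) ≤ 5√r
  have hrpos : 0 < r := by
    by_contra h
    push_neg at h
    interval_cases r
    have hsp : Real.sqrt p ≤ p := by
      rcases Nat.eq_zero_or_pos p with hp0 | hp0
      · simp [hp0]
      · calc Real.sqrt p ≤ Real.sqrt ((p:ℝ)^2) := by
              apply Real.sqrt_le_sqrt
              have h1 : (1:ℝ) ≤ p := by exact_mod_cast hp0
              nlinarith
        _ = p := Real.sqrt_sq (by positivity)
    simp at hlow
    linarith
  have hsq : Real.sqrt r * Real.sqrt r = r := Real.mul_self_sqrt (by positivity)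
  have hsqp : Real.sqrt p * Real.sqrt p = p := Real.mul_self_sqrt (by positivity)
  have hsr : (0:ℝ) < Real.sqrt r := Real.sqrt_pos.mpr (by exact_mod_cast hrpos)
  have hspn : (0:ℝ) ≤ Real.sqrt p := Real.sqrt_nonneg _
  have hcoef : 2 * Real.sqrt p + ((p:ℝ) + 1 - r) ≤ 5 * Real.sqrt r := by
    set a := Real.sqrt p
    set b := Real.sqrt r
    have h1 : (p:ℝ) + 1 - r ≤ a := by linarith [hlow]
    have h2 : a * a + 1 - a ≤ b * b := by rw [hsqp, hsq]; linarith [hlow]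
    nlinarith [sq_nonneg (4*a - 25/8), sq_nonneg (5*b - 3*a), sq_nonneg (5*b + 3*a), hsr.le, hspn, mul_nonneg hspn hsr.le]
  have hrhs : (5 / Real.sqrt r) * (r : ℝ) = 5 * Real.sqrt r := by
    field_simp
    nlinarith [hsq]
  rw [hrhs]
  calc ∑ s ∈ S, ∑ g, f g * f (g * s)
      ≤ 2 * Real.sqrt p * F + ((p:ℝ) + 1 - r) * F := hmain
    _ ≤ 5 * Real.sqrt r * F := by
        nlinarith [mul_le_mul_of_nonneg_right hcoef hFnonneg]
end

section
/- Let Cay²(A;G;B) be a left/right Cayley complex with |A| = |B| = r which is a λ-expander (both Cay(A;G) and Cay(G;B) are λ-expanders), and let C₁ ≤ F_2^r be a code. Then the left/right Cayley expander code C = C[G,A,B,C₁] ≤ F_2^S has rate ρ(C) ≥ 4ρ(C₁) − 3. -/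
open Finset

/-!
Compose functions on squares with `(a, g, b) ↦ [a, g, b]`; this embeds `F₂^S` into the functions
on `A × G × B`, and the code is cut out by requiring every local view to lie in `C₁`. Each of the
`|G| r` edges (left and right ones together) imposes `r - dim C₁` linear conditions, and the two
orientations `(a, g)`, `(a⁻¹, a g)` of an edge impose the same ones, so
`dim C ≥ |S| - |G| r (r - dim C₁)`. Every square has at most four representatives, hence
`|G| r² ≤ 4 |S|`, which turns the bound into `dim C ≥ (4 dim C₁ / r - 3) |S|`.
-/

theorem Function.Involutive.exists_two_mul_card_eq {X : Type*} [Fintype X] {σ : X → X}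
    (hσ : Function.Involutive σ) (hfix : ∀ x, σ x ≠ x) :
    ∃ T : Finset X, (∀ x, x ∈ T ∨ σ x ∈ T) ∧ 2 * #T = Fintype.card X := by
  let e := Fintype.equivFin X
  have hne : ∀ x, e x ≠ e (σ x) := fun x h => hfix x (e.injective h).symm
  refine ⟨univ.filter fun x => e x < e (σ x), fun x => ?_, ?_⟩
  · rcases (hne x).lt_or_gt with h | h
    · exact .inl (by simpa using h)
    · exact .inr (by simpa [hσ x] using h)
  · have hswap : #(univ.filter fun x => ¬ e x < e (σ x)) = #(univ.filter fun x => e x < e (σ x)) :=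
      card_nbij' σ σ
        (fun x hx => by
          simp only [coe_filter, mem_univ, true_and, Set.mem_ofPred_eq, not_lt, hσ x] at hx ⊢
          exact hx.lt_of_ne (hne x).symm)
        (fun x hx => by
          simp only [coe_filter, mem_univ, true_and, Set.mem_ofPred_eq, not_lt, hσ x] at hx ⊢
          exact hx.le)
        (fun x _ => hσ x) (fun x _ => hσ x)
    have := card_filter_add_card_filter_not (s := univ) fun x => e x < e (σ x)
    rw [hswap, card_univ] at this
    omega

theorem two_mul_finrank_le_of_involutive_constraints {K U W X : Type*} [Field K]
    [AddCommGroup U] [Module K U] [FiniteDimensional K U]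
    [AddCommGroup W] [Module K W] [FiniteDimensional K W] [Fintype X]
    {σ : X → X} (hσ : Function.Involutive σ) (hfix : ∀ x, σ x ≠ x)
    (φ : U →ₗ[K] X → W) (hφ : ∀ u x, φ u (σ x) = φ u x) (W' : Submodule K W)
    (L : Submodule K U) (hL : ∀ u, (∀ x, φ u x ∈ W') → u ∈ L) :
    2 * Module.finrank K U ≤
      2 * Module.finrank K L + Fintype.card X * Module.finrank K (W ⧸ W') := by
  obtain ⟨T, hT, hTcard⟩ := hσ.exists_two_mul_card_eq hfix
  let Θ : U →ₗ[K] T → W ⧸ W' := LinearMap.pi fun t => W'.mkQ ∘ₗ LinearMap.proj t.1 ∘ₗ φ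
  -- only one of `x`, `σ x` needs to be checked, since `φ u` takes the same value on both
  have hker : LinearMap.ker Θ ≤ L := fun u hu => hL u fun x => by
    have hzero (t : T) : φ u t ∈ W' := by
      simpa [Θ, Submodule.Quotient.mk_eq_zero] using congrFun hu t
    rcases hT x with hx | hx
    · exact hzero ⟨x, hx⟩
    · simpa [hφ] using hzero ⟨σ x, hx⟩
  have hrange : Module.finrank K (LinearMap.range Θ) ≤ #T * Module.finrank K (W ⧸ W') := by
    simpa [Module.finrank_pi_fintype] using Submodule.finrank_le (LinearMap.range Θ)
  have := Θ.finrank_range_add_finrank_ker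
  have := Submodule.finrank_mono hker
  rw [← hTcard, mul_assoc]
  omega

theorem Submodule.finrank_comap_le_of_injective {K V V' : Type*} [Field K]
    [AddCommGroup V] [Module K V] [AddCommGroup V'] [Module K V'] [FiniteDimensional K V']
    {f : V →ₗ[K] V'} (hf : Function.Injective f) (p : Submodule K V') :
    Module.finrank K (p.comap f) ≤ Module.finrank K p :=
  (equivMapOfInjective f hf _).finrank_eq.trans_le (finrank_mono (p.map_comap_le f))

theorem rate_le_of_counts {s d n r k q : ℕ} (hqk : q + k = r) (hcount : r * (n * r) ≤ 4 * s)
    (hdim : 2 * s ≤ 2 * d + 2 * (r * n) * q) :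
    (4 * ((k : ℝ) / r) - 3) * s ≤ d := by
  have hdim' : (s : ℝ) ≤ d + r * n * q := by
    have : (2 * s : ℝ) ≤ 2 * d + 2 * (r * n) * q := by exact_mod_cast hdim
    linarith
  rcases (Nat.zero_le r).eq_or_lt with hr | hr
  · subst hr
    simp only [Nat.cast_zero, div_zero, mul_zero, zero_mul, add_zero] at hdim' ⊢
    linarith [(Nat.cast_nonneg s : (0 : ℝ) ≤ s)]
  have hr' : (0 : ℝ) < r := by exact_mod_cast hr
  have hkq' : (k : ℝ) = r - q := by rw [← hqk]; push_cast; ring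
  have hcount' : (r : ℝ) * (n * r) ≤ 4 * s := by exact_mod_cast hcount
  have hedges : (r : ℝ) * n * q ≤ 4 * q * s / r := by
    rw [le_div_iff₀ hr']
    nlinarith [(Nat.cast_nonneg q : (0 : ℝ) ≤ q)]
  have hrate : (4 * ((k : ℝ) / r) - 3) * s = s - 4 * q * s / r := by
    rw [hkq']; field_simp; ring
  linarith

section CayleyComplex

variable {G : Type*} [Group G] {A B : Finset G} {invA : ↥A ≃ ↥A} {invB : ↥B ≃ ↥B}

variable (invA invB) in
/-- `.inl (a, g)` is the left edge `{g, a g}` and `.inr (g, b)` the right edge `{g, g b}`, each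
oriented from `g`; `edgeFlip` reverses the orientation. -/
def edgeFlip : (↥A × G) ⊕ (G × ↥B) → (↥A × G) ⊕ (G × ↥B) :=
  Sum.map (fun p => (invA p.1, p.1 * p.2)) (fun p => (p.1 * p.2, invB p.2))

theorem edgeFlip_involutive (hinvA : ∀ a : ↥A, (invA a : G) = (a : G)⁻¹)
    (hinvB : ∀ b : ↥B, (invB b : G) = (b : G)⁻¹) : Function.Involutive (edgeFlip invA invB) := by
  rintro (⟨a, g⟩ | ⟨g, b⟩)
  · have : invA (invA a) = a := Subtype.ext (by rw [hinvA, hinvA, inv_inv])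
    simp [edgeFlip, this, hinvA]
  · have : invB (invB b) = b := Subtype.ext (by rw [hinvB, hinvB, inv_inv])
    simp [edgeFlip, this, hinvB, mul_assoc]

theorem edgeFlip_ne (h1A : (1 : G) ∉ A) (h1B : (1 : G) ∉ B) (x : (↥A × G) ⊕ (G × ↥B)) :
    edgeFlip invA invB x ≠ x := by
  rcases x with ⟨a, g⟩ | ⟨g, b⟩
  · simpa [edgeFlip] using fun _ (h : (a : G) = 1) => h1A (h ▸ a.2)
  · simpa [edgeFlip] using fun (h : (b : G) = 1) _ => h1B (h ▸ b.2)

variable [DecidableEq G]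

theorem cSquare_inv_mul_left (a g b : G) : cSquare a⁻¹ (a * g) b = cSquare a g b := by
  ext x
  simp only [cSquare, mem_insert, mem_singleton, inv_inv, inv_mul_cancel_left]
  tauto

theorem cSquare_mul_inv_right (a g b : G) : cSquare a (g * b) b⁻¹ = cSquare a g b := by
  ext x
  simp only [cSquare, mem_insert, mem_singleton, inv_inv, mul_assoc, mul_inv_cancel, mul_one]
  tauto

theorem card_cSquare_le_four (a g b : G) : #(cSquare a g b) ≤ 4 :=
  (card_insert_le _ _).trans <| Nat.succ_le_succ <| (card_insert_le _ _).trans <|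
    Nat.succ_le_succ <| (card_insert_le _ _).trans <| by simp

theorem card_le_four_mul_card_image_cSquare (T : Finset (G × G × G)) :
    #T ≤ 4 * #(T.image fun t => cSquare t.1 t.2.1 t.2.2) := by
  refine card_le_mul_card_image T 4 fun Q hQ => ?_
  obtain ⟨u, -, rfl⟩ := mem_image.mp hQ
  refine (card_le_card fun t ht => ?_).trans (card_cSquare_le_four u.1 u.2.1 u.2.2)
  obtain ⟨-, ht⟩ := mem_filter.mp ht
  exact ht ▸ mem_insert_self _ _

variable [Fintype G]

variable (A B) in
def cSquares : Finset (Finset (G × G × G)) :=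
  (A ×ˢ (univ : Finset G) ×ˢ B).image fun t => cSquare t.1 t.2.1 t.2.2

def toCSquare (t : ↥A × G × ↥B) : cSquares A B :=
  ⟨cSquare t.1 t.2.1 t.2.2, mem_image.mpr
    ⟨((t.1 : G), t.2.1, (t.2.2 : G)),
      mem_product.mpr ⟨t.1.2, mem_product.mpr ⟨mem_univ _, t.2.2.2⟩⟩, rfl⟩⟩

theorem toCSquare_surjective : Function.Surjective (toCSquare (A := A) (B := B)) := by
  rintro ⟨Q, hQ⟩
  obtain ⟨⟨a, g, b⟩, ht, rfl⟩ := mem_image.mp hQ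
  simp only [mem_product, mem_univ, true_and] at ht
  exact ⟨(⟨a, ht.1⟩, g, ⟨b, ht.2⟩), Subtype.ext rfl⟩

theorem toCSquare_flip_left (hinvA : ∀ a : ↥A, (invA a : G) = (a : G)⁻¹) (a : ↥A) (g : G)
    (b : ↥B) : toCSquare (invA a, a * g, b) = toCSquare (a, g, b) :=
  Subtype.ext <| by simp only [toCSquare, hinvA, cSquare_inv_mul_left]

theorem toCSquare_flip_right (hinvB : ∀ b : ↥B, (invB b : G) = (b : G)⁻¹) (a : ↥A) (g : G)
    (b : ↥B) : toCSquare (a, g * b, invB b) = toCSquare (a, g, b) :=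
  Subtype.ext <| by simp only [toCSquare, hinvB, cSquare_mul_inv_right]

variable {R : Type*} [Semiring R] {r : ℕ}

variable (R) in
def localViews (ea : ↥A ≃ Fin r) (eb : ↥B ≃ Fin r) :
    (↥A × G × ↥B → R) →ₗ[R] (↥A × G) ⊕ (G × ↥B) → Fin r → R where
  toFun f := Sum.elim (fun p i => f (p.1, p.2, eb.symm i)) (fun p i => f (ea.symm i, p.1, p.2))
  map_add' f f' := by ext (p | p) i <;> rfl
  map_smul' c f := by ext (p | p) i <;> rfl

theorem localViews_funLeft_toCSquare_edgeFlip (hinvA : ∀ a : ↥A, (invA a : G) = (a : G)⁻¹)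
    (hinvB : ∀ b : ↥B, (invB b : G) = (b : G)⁻¹) (ea : ↥A ≃ Fin r) (eb : ↥B ≃ Fin r)
    (h : cSquares A B → R) (x : (↥A × G) ⊕ (G × ↥B)) :
    localViews R ea eb (LinearMap.funLeft R R toCSquare h) (edgeFlip invA invB x) =
      localViews R ea eb (LinearMap.funLeft R R toCSquare h) x := by
  rcases x with ⟨a, g⟩ | ⟨g, b⟩ <;> funext i
  · exact congrArg h (toCSquare_flip_left hinvA a g _)
  · exact congrArg h (toCSquare_flip_right hinvB _ g b)

end CayleyComplex

theorem stmt10_general {G : Type*} [Group G] [Fintype G] [DecidableEq G]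
    (A B : Finset G) (r : ℕ) (hcA : A.card = r) (hcB : B.card = r)
    (h1A : (1 : G) ∉ A) (h1B : (1 : G) ∉ B)
    (ea : ↥A ≃ Fin r) (eb : ↥B ≃ Fin r)
    (invA : ↥A ≃ ↥A) (hinvA : ∀ a : ↥A, ((invA a : G)) = (a : G)⁻¹)
    (invB : ↥B ≃ ↥B) (hinvB : ∀ b : ↥B, ((invB b : G)) = (b : G)⁻¹)
    (C1 : Submodule (ZMod 2) (Fin r → ZMod 2))
    (C : Submodule (ZMod 2) (↥A × G × ↥B → ZMod 2))
    (hC : ∀ f : ↥A × G × ↥B → ZMod 2, f ∈ C ↔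
      ((∀ (a : ↥A) (g : G) (b : ↥B),
          f (a, g, b) = f (invA a, (a : G) * g, b) ∧
          f (a, g, b) = f (a, g * (b : G), invB b)) ∧
       ((∀ (a : ↥A) (g : G), (fun i : Fin r => f (a, g, eb.symm i)) ∈ C1) ∧
        (∀ (g : G) (b : ↥B), (fun i : Fin r => f (ea.symm i, g, b)) ∈ C1)))) :
    (4 * ((Module.finrank (ZMod 2) C1 : ℝ) / r) - 3) *
        (((A ×ˢ (univ : Finset G) ×ˢ B).image fun t => cSquare t.1 t.2.1 t.2.2).card : ℝ)
      ≤ (Module.finrank (ZMod 2) C : ℝ) := by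
  let Ψ := LinearMap.funLeft (ZMod 2) (ZMod 2) (toCSquare (A := A) (B := B))
  have hcode (h : cSquares A B → ZMod 2) (hh : ∀ x, localViews (ZMod 2) ea eb (Ψ h) x ∈ C1) :
      h ∈ C.comap Ψ :=
    (hC _).mpr ⟨fun a g b => ⟨congrArg h (toCSquare_flip_left hinvA a g b).symm,
      congrArg h (toCSquare_flip_right hinvB a g b).symm⟩,
      fun a g => hh (.inl (a, g)), fun g b => hh (.inr (g, b))⟩
  have hdim := two_mul_finrank_le_of_involutive_constraints (edgeFlip_involutive hinvA hinvB)
    (edgeFlip_ne h1A h1B) (localViews (ZMod 2) ea eb ∘ₗ Ψ)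
    (localViews_funLeft_toCSquare_edgeFlip hinvA hinvB ea eb) C1 (C.comap Ψ) hcode
  have hcomap := C.finrank_comap_le_of_injective
    (LinearMap.funLeft_injective_of_surjective _ _ _ toCSquare_surjective)
  simp only [Module.finrank_fintype_fun_eq_card, Fintype.card_coe, Fintype.card_sum,
    Fintype.card_prod, hcA, hcB] at hdim
  have hcount := card_le_four_mul_card_image_cSquare (A ×ˢ (univ : Finset G) ×ˢ B)
  rw [card_product, card_product, hcA, hcB, card_univ] at hcount
  refine rate_le_of_counts (C1.finrank_quotient_add_finrank.trans (by simp)) hcount ?_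
  change 2 * #(cSquares A B) ≤ _
  linarith

/-- **Rate of left/right Cayley expander codes:** `ρ(C) ≥ 4ρ(C₁) − 3`.  The code is
modeled as the submodule of functions `f : A × G × B → F₂` invariant under the square
identifications whose local view along every (left and right) edge lies in `C₁`; its
block length is the number of squares `|S|`. -/
theorem stmt10 {G : Type*} [Group G] [Fintype G] [DecidableEq G]
    (A B : Finset G) (r : ℕ) (hcA : A.card = r) (hcB : B.card = r)
    (hAsym : ∀ a ∈ A, a⁻¹ ∈ A) (hBsym : ∀ b ∈ B, b⁻¹ ∈ B)
    (h1A : (1 : G) ∉ A) (h1B : (1 : G) ∉ B)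
    (lam : ℝ)
    (hexpA : ∀ h : G → ℝ, ∑ g, h g = 0 →
      ∑ g, h g * ∑ a ∈ A, h (a * g) ≤ lam * r * ∑ g, h g ^ 2)
    (hexpB : ∀ h : G → ℝ, ∑ g, h g = 0 →
      ∑ g, h g * ∑ b ∈ B, h (g * b) ≤ lam * r * ∑ g, h g ^ 2)
    (ea : ↥A ≃ Fin r) (eb : ↥B ≃ Fin r)
    (invA : ↥A ≃ ↥A) (hinvA : ∀ a : ↥A, ((invA a : G)) = (a : G)⁻¹)
    (invB : ↥B ≃ ↥B) (hinvB : ∀ b : ↥B, ((invB b : G)) = (b : G)⁻¹)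
    (C1 : Submodule (ZMod 2) (Fin r → ZMod 2))
    (C : Submodule (ZMod 2) (↥A × G × ↥B → ZMod 2))
    (hC : ∀ f : ↥A × G × ↥B → ZMod 2, f ∈ C ↔
      ((∀ (a : ↥A) (g : G) (b : ↥B),
          f (a, g, b) = f (invA a, (a : G) * g, b) ∧
          f (a, g, b) = f (a, g * (b : G), invB b)) ∧
       ((∀ (a : ↥A) (g : G), (fun i : Fin r => f (a, g, eb.symm i)) ∈ C1) ∧
        (∀ (g : G) (b : ↥B), (fun i : Fin r => f (ea.symm i, g, b)) ∈ C1)))) :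
    (4 * ((Module.finrank (ZMod 2) C1 : ℝ) / r) - 3) *
        (((A ×ˢ (univ : Finset G) ×ˢ B).image fun t => cSquare t.1 t.2.1 t.2.2).card : ℝ)
      ≤ (Module.finrank (ZMod 2) C : ℝ) :=
  stmt10_general A B r hcA hcB h1A h1B ea eb invA hinvA invB hinvB C1 C hC
end

section
/- In the setting of the left/right Cayley expander code with base code C₁ of normalized distance δ₁, suppose W = (W_g)_{g∈G} is a collection of local codewords W_g ∈ C_g ≅ C₁⊗C₁, and let R be the set of edges e = {g,g'} on which the two views disagree (W_g|_{S(e)} ≠ W_{g'}|_{S(e)}). Then for every edge e ∈ R, n^∥(e) + n₁(e) ≥ δ₁·r, where n^∥(e) is the number of edges parallel to e lying in R and n₁(e) = n₁(g) + n₁(g') counts the R-edges incident to the two endpoints of e. -/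
open Finset

variable {G : Type*} [Group G] [Fintype G] (A B : Finset G)

/-- The left edge `⌊a,g⌋` is a disagreeing edge for the collection `W` of local views:
the views of its two endpoints `g` and `ag` on the squares `[a,g,b]`, `b ∈ B`,
differ. -/
def leftDis (invA : ↥A ≃ ↥A) (W : G → ↥A × ↥B → ZMod 2) (a : ↥A) (g : G) : Prop :=
  ∃ b : ↥B, W g (a, b) ≠ W ((a : G) * g) (invA a, b)

/-- The right edge `⌈g,b⌉` is a disagreeing edge for `W`: the views of its two endpoints
`g` and `gb` on the squares `[a,g,b]`, `a ∈ A`, differ. -/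
def rightDis (invB : ↥B ≃ ↥B) (W : G → ↥A × ↥B → ZMod 2) (g : G) (b : ↥B) : Prop :=
  ∃ a : ↥A, W g (a, b) ≠ W (g * (b : G)) (a, invB b)

open scoped Classical in
/-- `n₁(g)`: the number of disagreeing edges incident to the vertex `g`. -/
noncomputable def nOne (invA : ↥A ≃ ↥A) (invB : ↥B ≃ ↥B)
    (W : G → ↥A × ↥B → ZMod 2) (g : G) : ℕ :=
  (univ.filter fun a : ↥A => leftDis A B invA W a g).card +
  (univ.filter fun b : ↥B => rightDis A B invB W g b).card

open scoped Classical in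
/-- **Local structure of disagreeing edges.** If `W = (W_g)` is a collection of local
views `W_g ∈ C₁ ⊗ C₁` and `e` is a disagreeing edge, then
`n^∥(e) + n₁(e) ≥ δ₁ · r`, where `n^∥(e)` counts disagreeing edges parallel to `e` and
`n₁(e) = n₁(g) + n₁(g')` counts disagreeing edges at the endpoints of `e`. -/
theorem stmt18 {G : Type*} [Group G] [Fintype G] (A B : Finset G) (r : ℕ)
    (ea : ↥A ≃ Fin r) (eb : ↥B ≃ Fin r)
    (invA : ↥A ≃ ↥A) (hinvA : ∀ a : ↥A, ((invA a : G)) = (a : G)⁻¹)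
    (invB : ↥B ≃ ↥B) (hinvB : ∀ b : ↥B, ((invB b : G)) = (b : G)⁻¹)
    (C1 : Submodule (ZMod 2) (Fin r → ZMod 2))
    (δ1 : ℝ) (hδ1 : ∀ w : Fin r → ZMod 2, w ∈ C1 → w ≠ 0 →
      δ1 * r ≤ ((univ.filter fun i : Fin r => w i ≠ 0).card : ℝ))
    (W : G → ↥A × ↥B → ZMod 2)
    (hW : ∀ g : G,
      (∀ a : ↥A, (fun j : Fin r => W g (a, eb.symm j)) ∈ C1) ∧
      (∀ b : ↥B, (fun i : Fin r => W g (ea.symm i, b)) ∈ C1)) :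
    (∀ (a : ↥A) (g : G), leftDis A B invA W a g →
      δ1 * r ≤
        ((univ.filter fun b : ↥B => leftDis A B invA W a (g * (b : G))).card : ℝ) +
        nOne A B invA invB W g + nOne A B invA invB W ((a : G) * g)) ∧
    (∀ (g : G) (b : ↥B), rightDis A B invB W g b →
      δ1 * r ≤
        ((univ.filter fun a : ↥A => rightDis A B invB W ((a : G) * g) b).card : ℝ) +
        nOne A B invA invB W g + nOne A B invA invB W (g * (b : G))) := by
  classical
  constructor
  · intro a g hdis
    set w : Fin r → ZMod 2 :=
      fun j => W g (a, eb.symm j) - W ((a : G) * g) (invA a, eb.symm j) with hw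
    have hwC : w ∈ C1 := C1.sub_mem ((hW g).1 a) ((hW ((a : G) * g)).1 (invA a))
    have hwne : w ≠ 0 := by
      obtain ⟨b, hb⟩ := hdis
      intro h
      apply hb
      have := congrFun h (eb b)
      simpa [hw, sub_eq_zero] using this
    have hcard : (univ.filter fun i : Fin r => w i ≠ 0).card
        = (univ.filter fun b : ↥B => W g (a, b) ≠ W ((a : G) * g) (invA a, b)).card := by
      apply Finset.card_bij (fun i _ => eb.symm i)
      · intro i hi
        simp only [mem_filter, mem_univ, true_and] at hi ⊢
        simpa [hw, sub_eq_zero] using hi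
      · intro i _ j _ h; exact eb.symm.injective h
      · intro b hb
        refine ⟨eb b, ?_, by simp⟩
        simp only [mem_filter, mem_univ, true_and] at hb ⊢
        simpa [hw, sub_eq_zero] using hb
    have hsub : (univ.filter fun b : ↥B => W g (a, b) ≠ W ((a : G) * g) (invA a, b)) ⊆
        (univ.filter fun b : ↥B => leftDis A B invA W a (g * (b : G))) ∪
        ((univ.filter fun b : ↥B => rightDis A B invB W g b) ∪
         (univ.filter fun b : ↥B => rightDis A B invB W ((a : G) * g) b)) := by
      intro b hb
      simp only [mem_filter, mem_univ, true_and, mem_union] at hb ⊢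
      by_contra hcon
      push_neg at hcon
      obtain ⟨h1, h2, h3⟩ := hcon
      simp only [leftDis, rightDis, not_exists, not_not] at h1 h2 h3
      exact hb (by rw [h2 a, h1 (invB b), ← mul_assoc, ← h3 (invA a)])
    have hn : (univ.filter fun b : ↥B =>
          W g (a, b) ≠ W ((a : G) * g) (invA a, b)).card ≤
        (univ.filter fun b : ↥B => leftDis A B invA W a (g * (b : G))).card +
        nOne A B invA invB W g + nOne A B invA invB W ((a : G) * g) := by
      have h1 := Finset.card_le_card hsub
      have h2 := Finset.card_union_le
        (univ.filter fun b : ↥B => leftDis A B invA W a (g * (b : G)))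
        ((univ.filter fun b : ↥B => rightDis A B invB W g b) ∪
         (univ.filter fun b : ↥B => rightDis A B invB W ((a : G) * g) b))
      have h3 := Finset.card_union_le
        (univ.filter fun b : ↥B => rightDis A B invB W g b)
        (univ.filter fun b : ↥B => rightDis A B invB W ((a : G) * g) b)
      unfold nOne
      omega
    have hle := hδ1 w hwC hwne
    rw [hcard] at hle
    exact hle.trans (by exact_mod_cast hn)
  · intro g b hdis
    set w : Fin r → ZMod 2 :=
      fun i => W g (ea.symm i, b) - W (g * (b : G)) (ea.symm i, invB b) with hw
    have hwC : w ∈ C1 := C1.sub_mem ((hW g).2 b) ((hW (g * (b : G))).2 (invB b))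
    have hwne : w ≠ 0 := by
      obtain ⟨a, ha⟩ := hdis
      intro h
      apply ha
      have := congrFun h (ea a)
      simpa [hw, sub_eq_zero] using this
    have hcard : (univ.filter fun i : Fin r => w i ≠ 0).card
        = (univ.filter fun a : ↥A => W g (a, b) ≠ W (g * (b : G)) (a, invB b)).card := by
      apply Finset.card_bij (fun i _ => ea.symm i)
      · intro i hi
        simp only [mem_filter, mem_univ, true_and] at hi ⊢
        simpa [hw, sub_eq_zero] using hi
      · intro i _ j _ h; exact ea.symm.injective h
      · intro a ha
        refine ⟨ea a, ?_, by simp⟩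
        simp only [mem_filter, mem_univ, true_and] at ha ⊢
        simpa [hw, sub_eq_zero] using ha
    have hsub : (univ.filter fun a : ↥A => W g (a, b) ≠ W (g * (b : G)) (a, invB b)) ⊆
        (univ.filter fun a : ↥A => rightDis A B invB W ((a : G) * g) b) ∪
        ((univ.filter fun a : ↥A => leftDis A B invA W a g) ∪
         (univ.filter fun a : ↥A => leftDis A B invA W a (g * (b : G)))) := by
      intro a ha
      simp only [mem_filter, mem_univ, true_and, mem_union] at ha ⊢
      by_contra hcon
      push_neg at hcon
      obtain ⟨h1, h2, h3⟩ := hcon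
      simp only [leftDis, rightDis, not_exists, not_not] at h1 h2 h3
      exact ha (by rw [h2 b, h1 (invA a), mul_assoc, ← h3 (invB b)])
    have hn : (univ.filter fun a : ↥A =>
          W g (a, b) ≠ W (g * (b : G)) (a, invB b)).card ≤
        (univ.filter fun a : ↥A => rightDis A B invB W ((a : G) * g) b).card +
        nOne A B invA invB W g + nOne A B invA invB W (g * (b : G)) := by
      have h1 := Finset.card_le_card hsub
      have h2 := Finset.card_union_le
        (univ.filter fun a : ↥A => rightDis A B invB W ((a : G) * g) b)
        ((univ.filter fun a : ↥A => leftDis A B invA W a g) ∪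
         (univ.filter fun a : ↥A => leftDis A B invA W a (g * (b : G))))
      have h3 := Finset.card_union_le
        (univ.filter fun a : ↥A => leftDis A B invA W a g)
        (univ.filter fun a : ↥A => leftDis A B invA W a (g * (b : G)))
      unfold nOne
      omega
    have hle := hδ1 w hwC hwne
    rw [hcard] at hle
    exact hle.trans (by exact_mod_cast hn)
end
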